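/- arXiv:1912.06928 — 4 statements merged into one kernel-verified Lean document; each statement's English description precedes it below -/
import Mathlib

section
/- For every n ≥ 1, the n-th moment of the Pseudo-Lindley distribution equals m_n = n!(β + n)/(θ^n β); that is, ∫_0^∞ x^n · θ(β - 1 + θx)e^{-θx}/β dx = n!(β + n)/(θ^n β). -/
/-!
Expanding `θ (β - 1 + θ x)` splits the `n`-th moment into the Gamma integrals
`∫₀^∞ x ^ k e^{-θ x} dx = k! / θ ^ (k + 1)` for `k = n` and `k = n + 1`, and `(n + 1)! = (n + 1) n!`
collects them into `n! (β + n) / (θ ^ n β)`.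
-/

open Real MeasureTheory Set Nat

lemma integrableOn_pow_mul_exp_neg_mul_Ioi {θ : ℝ} (hθ : 0 < θ) (k : ℕ) :
    IntegrableOn (fun x : ℝ => x ^ k * exp (-θ * x)) (Ioi 0) := by
  refine (integrableOn_rpow_mul_exp_neg_mul_rpow (p := 1) (s := k)
    (neg_one_lt_zero.trans_le k.cast_nonneg) one_pos hθ).congr_fun
    (fun x _ => ?_) measurableSet_Ioi
  simp only [rpow_natCast, rpow_one]

lemma integral_pow_mul_exp_neg_mul_Ioi {θ : ℝ} (hθ : 0 < θ) (k : ℕ) :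
    ∫ x in Ioi (0 : ℝ), x ^ k * exp (-θ * x) = k ! / θ ^ (k + 1) := by
  have hGamma := integral_rpow_mul_exp_neg_mul_Ioi (a := k + 1) (by positivity) hθ
  rw [add_sub_cancel_right, Gamma_nat_eq_factorial, ← cast_add_one, rpow_natCast, one_div_pow]
    at hGamma
  calc ∫ x in Ioi (0 : ℝ), x ^ k * exp (-θ * x)
      = ∫ x in Ioi (0 : ℝ), x ^ (k : ℝ) * exp (-(θ * x)) := by
        simp only [rpow_natCast, neg_mul]
    _ = k ! / θ ^ (k + 1) := by rw [hGamma]; ring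

lemma integral_pow_mul_affine_mul_exp_neg_mul_Ioi {θ : ℝ} (hθ : 0 < θ) (a b : ℝ) (n : ℕ) :
    ∫ x in Ioi (0 : ℝ), x ^ n * ((a + b * x) * exp (-θ * x))
      = n ! * (a * θ + b * (n + 1)) / θ ^ (n + 2) := by
  have hsplit : ∀ x : ℝ, x ^ n * ((a + b * x) * exp (-θ * x))
      = a * (x ^ n * exp (-θ * x)) + b * (x ^ (n + 1) * exp (-θ * x)) := fun x => by ring
  simp_rw [hsplit]
  rw [integral_add ((integrableOn_pow_mul_exp_neg_mul_Ioi hθ n).const_mul a)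
      ((integrableOn_pow_mul_exp_neg_mul_Ioi hθ (n + 1)).const_mul b),
    integral_const_mul, integral_const_mul, integral_pow_mul_exp_neg_mul_Ioi hθ,
    integral_pow_mul_exp_neg_mul_Ioi hθ, factorial_succ]
  field_simp
  push_cast
  ring

theorem pseudoLindley_moments_general (θ β : ℝ) (hθ : 0 < θ) (n : ℕ) :
    ∫ x in Set.Ioi (0 : ℝ), x ^ n * (θ * (β - 1 + θ * x) * Real.exp (-θ * x) / β)
      = (Nat.factorial n : ℝ) * (β + n) / (θ ^ n * β) := by
  have hdensity : ∀ x : ℝ, x ^ n * (θ * (β - 1 + θ * x) * exp (-θ * x) / β)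
      = x ^ n * ((θ * (β - 1) + θ ^ 2 * x) * exp (-θ * x)) / β := fun x => by ring
  have hmoment : (n ! : ℝ) * (θ * (β - 1) * θ + θ ^ 2 * (n + 1)) / θ ^ (n + 2)
      = n ! * (β + n) / θ ^ n := by
    field_simp
    ring
  simp_rw [hdensity]
  rw [integral_div, integral_pow_mul_affine_mul_exp_neg_mul_Ioi hθ, hmoment, div_div]

theorem pseudoLindley_moments (θ β : ℝ) (hθ : 0 < θ) (hβ : 1 < β) (n : ℕ) (hn : 1 ≤ n) :
    ∫ x in Set.Ioi (0 : ℝ), x ^ n * (θ * (β - 1 + θ * x) * Real.exp (-θ * x) / β)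
      = (Nat.factorial n : ℝ) * (β + n) / (θ ^ n * β) :=
  pseudoLindley_moments_general θ β hθ n
end

section
/- The Pseudo-Lindley density satisfies the Von Mises condition for the Gumbel domain of attraction: lim_{x→∞} f'(x)(1 - F(x))/f(x)² = -1. -/
open Real Filter Topology

/-! Both `f' · (1 - F)` and `f²` are `e^{-2θx}` times a quadratic polynomial in `x`, so the
exponentials cancel and the Von Mises ratio is a ratio of quadratics whose leading coefficients
are `-θ · θ` and `θ²`. -/

theorem tendsto_mul_div_sq_atTop (a b c d e g : ℝ) (hg : g ≠ 0) :
    Tendsto (fun x => (a + b * x) * (c + d * x) / (e + g * x) ^ 2) atTop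
      (𝓝 (b * d / g ^ 2)) := by
  have hinv : Tendsto (fun x : ℝ => x⁻¹) atTop (𝓝 0) := tendsto_inv_atTop_zero
  have hlim : Tendsto (fun x : ℝ => (a * x⁻¹ + b) * (c * x⁻¹ + d) / (e * x⁻¹ + g) ^ 2) atTop
      (𝓝 ((a * 0 + b) * (c * 0 + d) / (e * 0 + g) ^ 2)) :=
    (((hinv.const_mul a).add_const b).mul ((hinv.const_mul c).add_const d)).div
      (((hinv.const_mul e).add_const g).pow 2) (by simpa using hg)
  simp only [mul_zero, zero_add] at hlim
  refine hlim.congr' ?_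
  filter_upwards [eventually_gt_atTop 0] with x hx
  -- multiply numerator and denominator by `x²`
  field_simp

theorem hasDerivAt_pseudoLindley_density (θ β x : ℝ) :
    HasDerivAt (fun x => θ * (β - 1 + θ * x) * exp (-θ * x) / β)
      (θ ^ 2 * (2 - β - θ * x) * exp (-θ * x) / β) x := by
  have hlin : HasDerivAt (fun x => β - 1 + θ * x) θ x := by
    simpa using ((hasDerivAt_id x).const_mul θ).const_add (β - 1)
  have hexp : HasDerivAt (fun x => exp (-θ * x)) (exp (-θ * x) * -θ) x := by
    simpa using ((hasDerivAt_id x).const_mul (-θ)).exp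
  have h := ((hlin.fun_mul hexp).const_mul θ).div_const β
  simp only [← mul_assoc] at h
  exact h.congr_deriv (by ring)

-- No positivity assumption on `x`: where `β - 1 + θ * x = 0` both sides are `_ / 0 = 0`.
theorem pseudoLindley_vonMises_ratio_eq (θ β : ℝ) (hθ : θ ≠ 0) (hβ : β ≠ 0) (x : ℝ) :
    θ ^ 2 * (2 - β - θ * x) * exp (-θ * x) / β * ((β + θ * x) * exp (-θ * x) / β)
        / (θ * (β - 1 + θ * x) * exp (-θ * x) / β) ^ 2
      = (2 - β + -θ * x) * (β + θ * x) / (β - 1 + θ * x) ^ 2 := by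
  have hc : θ ^ 2 * exp (-θ * x) ^ 2 / β ^ 2 ≠ 0 := by positivity
  calc _ = (2 - β + -θ * x) * (β + θ * x) * (θ ^ 2 * exp (-θ * x) ^ 2 / β ^ 2)
          / ((β - 1 + θ * x) ^ 2 * (θ ^ 2 * exp (-θ * x) ^ 2 / β ^ 2)) := by
        congr 1 <;> ring
    _ = _ := mul_div_mul_right _ _ hc

theorem pseudoLindley_vonMises (θ β : ℝ) (hθ : 0 < θ) (hβ : 1 < β)
    (f S : ℝ → ℝ)
    (hf : ∀ x : ℝ, f x = θ * (β - 1 + θ * x) * Real.exp (-θ * x) / β)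
    (hS : ∀ x : ℝ, S x = (β + θ * x) * Real.exp (-θ * x) / β) :
    Tendsto (fun x => deriv f x * S x / (f x) ^ 2) atTop (nhds (-1)) := by
  have hratio : (fun x => deriv f x * S x / f x ^ 2)
      = fun x => (2 - β + -θ * x) * (β + θ * x) / (β - 1 + θ * x) ^ 2 := by
    funext x
    rw [funext hf, (hasDerivAt_pseudoLindley_density θ β x).deriv, hS,
      pseudoLindley_vonMises_ratio_eq θ β hθ.ne' (by linarith)]
  have hlim := tendsto_mul_div_sq_atTop (2 - β) (-θ) β θ (β - 1) θ hθ.ne'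
  rw [show -θ * θ / θ ^ 2 = -1 by field_simp] at hlim
  rwa [hratio]
end

section
/- For every λ > 0, lim_{u→0⁺} (F^{-1}(1 - λu) - F^{-1}(1 - u))/(1/θ) = -log λ, where F is the Pseudo-Lindley CDF. Hence F belongs to the Gumbel extremal domain of attraction. -/
/-!
Writing `a = β + θ x`, the equation `S x = u` for the survival function `S` becomes
`a - log a = β - log β - log u`. So the levels `a(u)` and `a(λu)` of the quantiles
`F⁻¹(1 - u)` and `F⁻¹(1 - λu)` tend to infinity as `u → 0⁺`, while their values of
`t ↦ t - log t` differ by exactly `-log λ`. Since `|log a - log b| ≤ |a - b| / min a b`, the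
logarithms of two such levels become asymptotically equal, hence
`θ (F⁻¹(1 - λu) - F⁻¹(1 - u)) = a(λu) - a(u)` tends to `-log λ`.
-/

open Real Filter Set Topology

theorem abs_log_sub_log_le_div_min {a b : ℝ} (ha : 0 < a) (hb : 0 < b) :
    |log a - log b| ≤ |a - b| / min a b := by
  wlog hba : b ≤ a generalizing a b
  · rw [abs_sub_comm, abs_sub_comm a, min_comm]
    exact this hb ha (le_of_not_ge hba)
  have hlog : log a - log b = log (a / b) := (log_div ha.ne' hb.ne').symm
  rw [min_eq_right hba, abs_of_nonneg (sub_nonneg.2 hba), hlog,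
    abs_of_nonneg (log_nonneg ((one_le_div hb).2 hba))]
  calc log (a / b) ≤ a / b - 1 := log_le_sub_one_of_pos (div_pos ha hb)
    _ = (a - b) / b := by field_simp

theorem abs_log_sub_log_le_of_sub_log_sub_eq {a b m κ : ℝ} (hm : 1 < m) (ha : m ≤ a)
    (hb : m ≤ b) (h : a - log a - (b - log b) = κ) : |log a - log b| ≤ |κ| / (m - 1) := by
  have hm0 : 0 < m := by linarith
  have hmin : m ≤ min a b := le_min ha hb
  have hdiff : |log a - log b| ≤ |a - b| / m :=
    (abs_log_sub_log_le_div_min (by linarith) (by linarith)).trans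
      (div_le_div_of_nonneg_left (abs_nonneg _) hm0 hmin)
  have htri : |a - b| ≤ |κ| + |log a - log b| := by
    rw [show a - b = κ + (log a - log b) by linarith]
    exact abs_add_le _ _
  rw [le_div_iff₀ (by linarith)]
  rw [le_div_iff₀ hm0] at hdiff
  linarith

theorem tendsto_sub_of_sub_log_sub_eq {α : Type*} {L : Filter α} {a b : α → ℝ} {κ : ℝ}
    (ha : Tendsto a L atTop) (hb : Tendsto b L atTop)
    (h : ∀ᶠ i in L, a i - log (a i) - (b i - log (b i)) = κ) :
    Tendsto (fun i => a i - b i) L (𝓝 κ) := by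
  have hmin : Tendsto (fun i => min (a i) (b i)) L atTop := tendsto_inf_atTop L ha hb
  have hbound : Tendsto (fun i => |κ| / (min (a i) (b i) - 1)) L (𝓝 0) :=
    (tendsto_atTop_add_const_right L (-1) hmin).const_div_atTop |κ|
  have hlog : Tendsto (fun i => log (a i) - log (b i)) L (𝓝 0) := by
    refine squeeze_zero_norm' ?_ hbound
    filter_upwards [h, hmin.eventually_gt_atTop 1] with i hi hi1
    exact abs_log_sub_log_le_of_sub_log_sub_eq hi1 (min_le_left _ _) (min_le_right _ _) hi
  have hsum := hlog.const_add κ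
  rw [add_zero] at hsum
  refine hsum.congr' ?_
  filter_upwards [h] with i hi
  linarith

theorem tendsto_const_mul_nhdsGT_zero {c : ℝ} (hc : 0 < c) :
    Tendsto (fun u => c * u) (𝓝[>] 0) (𝓝[>] 0) := by
  refine tendsto_nhdsWithin_of_tendsto_nhds_of_eventually_within _ ?_
    (eventually_nhdsWithin_of_forall fun u (hu : 0 < u) => mul_pos hc hu)
  simpa using tendsto_nhdsWithin_of_tendsto_nhds ((continuous_const_mul c).tendsto 0)

theorem tendsto_atTop_of_tendsto_sub_log {α : Type*} {L : Filter α} {a : α → ℝ}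
    (h1 : ∀ᶠ i in L, 1 ≤ a i) (h : Tendsto (fun i => a i - log (a i)) L atTop) :
    Tendsto a L atTop :=
  tendsto_atTop_mono' L (h1.mono fun _ hi => by linarith [log_nonneg hi]) h

theorem strictMonoOn_sub_log : StrictMonoOn (fun t : ℝ => t - log t) (Ici 1) := by
  intro s (hs : 1 ≤ s) t _ hst
  have hs0 : 0 < s := by linarith
  have hlog : log t - log s < t - s :=
    calc log t - log s = log (t / s) := (log_div (by linarith) hs0.ne').symm
      _ < t / s - 1 := log_lt_sub_one_of_pos (div_pos (by linarith) hs0) (by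
          rw [Ne, div_eq_one_iff_eq hs0.ne']; exact hst.ne')
      _ = (t - s) / s := by field_simp
      _ ≤ t - s := div_le_self (by linarith) hs
  show s - log s < t - log t
  linarith

theorem sInf_setOf_le_eq_of_strictMonoOn {F : ℝ → ℝ} {x v : ℝ}
    (hF : StrictMonoOn F (Ici 0)) (hx : 0 ≤ x) (hFx : F x = v) (hneg : ∀ z < 0, F z < v) :
    sInf {z | v ≤ F z} = x := by
  suffices {z | v ≤ F z} = Ici x by rw [this, csInf_Ici]
  ext z
  change v ≤ F z ↔ x ≤ z
  rcases lt_or_ge z 0 with hz | hz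
  · constructor
    · intro h; linarith [hneg z hz]
    · intro h; linarith
  · rw [← hFx]
    exact hF.le_iff_le hx hz

noncomputable def pseudoLindleySurvival (θ β x : ℝ) : ℝ := (β + θ * x) * exp (-θ * x) / β

section pseudoLindleySurvival

variable {θ β : ℝ}

theorem continuous_pseudoLindleySurvival : Continuous (pseudoLindleySurvival θ β) := by
  unfold pseudoLindleySurvival
  fun_prop

theorem pseudoLindleySurvival_zero (hβ : β ≠ 0) : pseudoLindleySurvival θ β 0 = 1 := by
  simp [pseudoLindleySurvival, hβ]

theorem pseudoLindleySurvival_pos (hβ : 0 < β) {x : ℝ} (hx : 0 < β + θ * x) :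
    0 < pseudoLindleySurvival θ β x := by
  unfold pseudoLindleySurvival
  positivity

theorem log_pseudoLindleySurvival (hβ : 0 < β) {x : ℝ} (hx : 0 < β + θ * x) :
    log (pseudoLindleySurvival θ β x) = β - log β - (β + θ * x - log (β + θ * x)) := by
  rw [pseudoLindleySurvival, log_div (by positivity) hβ.ne', log_mul hx.ne' (exp_pos _).ne',
    log_exp]
  ring

theorem tendsto_pseudoLindleySurvival_atTop (hθ : 0 < θ) :
    Tendsto (pseudoLindleySurvival θ β) atTop (𝓝 0) := by
  have h : Tendsto (fun y : ℝ => (β * exp (-y) + y ^ 1 * exp (-y)) / β) atTop (𝓝 0) := by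
    simpa using ((tendsto_exp_neg_atTop_nhds_zero.const_mul β).add
      (tendsto_pow_mul_exp_neg_atTop_nhds_zero 1)).div_const β
  refine (h.comp (tendsto_id.const_mul_atTop hθ)).congr fun x => ?_
  simp only [Function.comp, pseudoLindleySurvival, id, pow_one, neg_mul]
  ring

theorem strictAntiOn_pseudoLindleySurvival (hθ : 0 < θ) (hβ : 1 ≤ β) :
    StrictAntiOn (pseudoLindleySurvival θ β) (Ici 0) := by
  intro x (hx : 0 ≤ x) y (hy : 0 ≤ y) hxy
  have hβ0 : 0 < β := by linarith
  have hx' : 1 ≤ β + θ * x := by nlinarith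
  have hy' : 1 ≤ β + θ * y := by nlinarith
  have hmono := strictMonoOn_sub_log hx' hy' (by nlinarith)
  dsimp only at hmono
  rw [← log_lt_log_iff (pseudoLindleySurvival_pos hβ0 (by linarith))
    (pseudoLindleySurvival_pos hβ0 (by linarith)), log_pseudoLindleySurvival hβ0 (by linarith),
    log_pseudoLindleySurvival hβ0 (by linarith)]
  linarith

theorem exists_pseudoLindleySurvival_eq (hθ : 0 < θ) (hβ : β ≠ 0) {u : ℝ}
    (hu : u ∈ Ioo 0 1) :
    ∃ x, 0 ≤ x ∧ pseudoLindleySurvival θ β x = u := by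
  obtain ⟨M, hMu, hM0⟩ := ((tendsto_pseudoLindleySurvival_atTop hθ).eventually
    (gt_mem_nhds hu.1)).and (eventually_ge_atTop 0) |>.exists
  have hmem : u ∈ Icc (pseudoLindleySurvival θ β M) (pseudoLindleySurvival θ β 0) := by
    rw [pseudoLindleySurvival_zero hβ]
    exact ⟨hMu.le, hu.2.le⟩
  obtain ⟨x, hx, hSx⟩ :=
    intermediate_value_Icc' hM0 continuous_pseudoLindleySurvival.continuousOn hmem
  exact ⟨x, hx.1, hSx⟩

end pseudoLindleySurvival

theorem pseudoLindley_quantile_spec {θ β : ℝ} (hθ : 0 < θ) (hβ : 1 ≤ β) {F : ℝ → ℝ}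
    (hF : ∀ x : ℝ, F x = if 0 ≤ x then 1 - (β + θ * x) * exp (-θ * x) / β else 0)
    {Finv : ℝ → ℝ} (hFinv : ∀ v ∈ Ioo (0 : ℝ) 1, Finv v = sInf {x : ℝ | v ≤ F x})
    {u : ℝ} (hu : u ∈ Ioo 0 1) :
    0 ≤ Finv (1 - u) ∧ pseudoLindleySurvival θ β (Finv (1 - u)) = u := by
  have hF_eq : ∀ z, 0 ≤ z → F z = 1 - pseudoLindleySurvival θ β z := fun z hz => by
    rw [hF, if_pos hz, pseudoLindleySurvival]
  have hF_mono : StrictMonoOn F (Ici 0) := fun y hy z hz hyz => by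
    rw [hF_eq y hy, hF_eq z hz]
    linarith [strictAntiOn_pseudoLindleySurvival hθ hβ hy hz hyz]
  obtain ⟨x, hx, hSx⟩ := exists_pseudoLindleySurvival_eq (β := β) hθ (by linarith) hu
  have hFinvx : Finv (1 - u) = x := by
    rw [hFinv _ ⟨by linarith [hu.2], by linarith [hu.1]⟩]
    refine sInf_setOf_le_eq_of_strictMonoOn hF_mono hx (by rw [hF_eq x hx, hSx]) ?_
    intro z hz
    rw [hF, if_neg hz.not_ge]
    linarith [hu.2]
  exact hFinvx ▸ ⟨hx, hSx⟩

theorem pseudoLindley_gumbel_quantile_limit (θ β : ℝ) (hθ : 0 < θ) (hβ : 1 < β)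
    (F : ℝ → ℝ)
    (hF : ∀ x : ℝ, F x = if 0 ≤ x then 1 - (β + θ * x) * Real.exp (-θ * x) / β else 0)
    (Finv : ℝ → ℝ) (hFinv : ∀ v ∈ Set.Ioo (0 : ℝ) 1, Finv v = sInf {x : ℝ | v ≤ F x})
    (l : ℝ) (hl : 0 < l) :
    Tendsto (fun u => (Finv (1 - l * u) - Finv (1 - u)) / (1 / θ))
      (nhdsWithin 0 (Set.Ioi 0)) (nhds (-Real.log l)) := by
  have hβ0 : 0 < β := by linarith
  set a : ℝ → ℝ := fun u => β + θ * Finv (1 - u)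
  have ha_spec : ∀ u ∈ Ioo (0 : ℝ) 1,
      1 ≤ a u ∧ a u - log (a u) = β - log β - log u := by
    intro u hu
    obtain ⟨hx, hSx⟩ := pseudoLindley_quantile_spec hθ hβ.le hF hFinv hu
    have hlog := log_pseudoLindleySurvival (θ := θ) hβ0 (by positivity : 0 < a u)
    rw [hSx] at hlog
    exact ⟨by nlinarith, by linarith⟩
  have hunit : ∀ᶠ u in 𝓝[>] (0 : ℝ), u ∈ Ioo 0 1 := Ioo_mem_nhdsGT one_pos
  have hscale := tendsto_const_mul_nhdsGT_zero hl
  have ha : Tendsto a (𝓝[>] 0) atTop := by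
    refine tendsto_atTop_of_tendsto_sub_log (hunit.mono fun u hu => (ha_spec u hu).1) ?_
    refine (tendsto_atTop_add_const_left _ (β - log β)
      (tendsto_neg_atBot_atTop.comp tendsto_log_nhdsGT_zero)).congr' ?_
    filter_upwards [hunit] with u hu
    rw [(ha_spec u hu).2, Function.comp_apply]
    ring
  have hdiff := tendsto_sub_of_sub_log_sub_eq (ha.comp hscale) ha (κ := -log l) (by
    filter_upwards [hunit, hscale.eventually hunit] with u hu hlu
    rw [Function.comp_apply, (ha_spec _ hlu).2, (ha_spec u hu).2, log_mul hl.ne' hu.1.ne']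
    ring)
  refine hdiff.congr fun u => ?_
  simp only [a, Function.comp_apply]
  field_simp
  ring
end

section
/- As u → 0⁺, F^{-1}(1 - u) = θ^{-1} log(1/u) · (1 + o(1)), i.e., lim_{u→0⁺} F^{-1}(1 - u)/(θ^{-1} log(1/u)) = 1, for the Pseudo-Lindley quantile function. -/
/-!
Write `L = log (1/u)` and `S(x) = (β + θx) e^{-θx} / β` for the survival function, so that
`F⁻¹(1 - u) = inf {x ≥ 0 | S(x) ≤ u}`. Since `S(x) ≥ e^{-θx}`, every such `x` has `θx ≥ L`.
Conversely, at `θx = L + 2√L` the polynomial factor is absorbed by the extra exponential decay,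
`1 + L + 2√L = (1 + √L)² ≤ e^{2√L}`, so `S(x) ≤ u`. Hence `θ F⁻¹(1 - u) / L` lies between `1` and
`1 + 2/√L`, which tends to `1` as `u → 0⁺`.
-/

open Real Filter Topology

namespace PseudoLindley

noncomputable section

def survival (θ β x : ℝ) : ℝ := (β + θ * x) * exp (-θ * x) / β

def cdf (θ β x : ℝ) : ℝ := if 0 ≤ x then 1 - survival θ β x else 0

def quantile (θ β v : ℝ) : ℝ := sInf {x : ℝ | v ≤ cdf θ β x}

end

variable {θ β x : ℝ}

lemma exp_neg_le_survival (hβ : 0 < β) (hx : 0 ≤ θ * x) : exp (-θ * x) ≤ survival θ β x := by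
  rw [survival, le_div_iff₀ hβ]
  nlinarith [exp_pos (-θ * x)]

lemma survival_le_exp_neg (hβ : 1 ≤ β) {L : ℝ} (hL : 0 ≤ L) (hx : θ * x = L + 2 * √L) :
    survival θ β x ≤ exp (-L) := by
  set s := √L
  have hs : 0 ≤ s := sqrt_nonneg L
  have hLs : L = s ^ 2 := (sq_sqrt hL).symm
  have hpoly : (1 + s) ^ 2 ≤ exp (2 * s) := by
    rw [show 2 * s = s + s by ring, exp_add, ← sq]
    gcongr
    linarith [add_one_le_exp s]
  have hβx : (β + θ * x) / β ≤ (1 + s) ^ 2 := by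
    rw [div_le_iff₀ (by linarith)]
    nlinarith
  calc survival θ β x = (β + θ * x) / β * exp (-(2 * s)) * exp (-L) := by
        rw [survival, neg_mul, hx, show -(L + 2 * s) = -(2 * s) + -L by ring, exp_add]
        ring
    _ ≤ exp (2 * s) * exp (-(2 * s)) * exp (-L) := by gcongr; exact hβx.trans hpoly
    _ = exp (-L) := by rw [← exp_add]; simp

lemma one_sub_le_cdf_iff {u : ℝ} (hu : u < 1) :
    1 - u ≤ cdf θ β x ↔ 0 ≤ x ∧ survival θ β x ≤ u := by
  unfold cdf
  split_ifs with hx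
  · exact ⟨fun h => ⟨hx, by linarith⟩, fun h => by linarith [h.2]⟩
  · exact ⟨fun h => by linarith, fun h => absurd h.1 hx⟩

variable {u : ℝ}

lemma log_one_div_le_of_one_sub_le_cdf (hθ : 0 < θ) (hβ : 0 < β) (hu : u ∈ Set.Ioo (0 : ℝ) 1)
    (hx : 1 - u ≤ cdf θ β x) : log (1 / u) ≤ θ * x := by
  obtain ⟨hx0, hSx⟩ := (one_sub_le_cdf_iff hu.2).1 hx
  have hexp : exp (-θ * x) ≤ exp (log u) :=
    (exp_neg_le_survival hβ (by positivity)).trans (hSx.trans_eq (exp_log hu.1).symm)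
  rw [one_div, log_inv]
  linarith [exp_le_exp.1 hexp]

lemma one_sub_le_cdf_of_mul_eq (hθ : 0 < θ) (hβ : 1 ≤ β) (hu : u ∈ Set.Ioo (0 : ℝ) 1)
    (hx : θ * x = log (1 / u) + 2 * √(log (1 / u))) : 1 - u ≤ cdf θ β x := by
  have hL : 0 ≤ log (1 / u) := log_nonneg (by rw [le_div_iff₀ hu.1]; linarith [hu.2])
  have hθx : 0 ≤ θ * x := by rw [hx]; positivity
  refine (one_sub_le_cdf_iff hu.2).2 ⟨?_, ?_⟩
  · exact (mul_nonneg_iff_of_pos_left hθ).1 hθx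
  · calc survival θ β x ≤ exp (-log (1 / u)) := survival_le_exp_neg hβ hL hx
      _ = u := by rw [one_div, log_inv, neg_neg, exp_log hu.1]

lemma log_one_div_le_mul_quantile_one_sub (hθ : 0 < θ) (hβ : 1 ≤ β) (hu : u ∈ Set.Ioo (0 : ℝ) 1) :
    log (1 / u) ≤ θ * quantile θ β (1 - u) := by
  have hne : (log (1 / u) + 2 * √(log (1 / u))) / θ ∈ {x | 1 - u ≤ cdf θ β x} :=
    one_sub_le_cdf_of_mul_eq hθ hβ hu (mul_div_cancel₀ _ hθ.ne')
  rw [← div_le_iff₀' hθ]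
  exact le_csInf ⟨_, hne⟩ fun x hx =>
    (div_le_iff₀' hθ).2 (log_one_div_le_of_one_sub_le_cdf hθ (by linarith) hu hx)

lemma mul_quantile_one_sub_le (hθ : 0 < θ) (hβ : 1 ≤ β) (hu : u ∈ Set.Ioo (0 : ℝ) 1) :
    θ * quantile θ β (1 - u) ≤ log (1 / u) + 2 * √(log (1 / u)) := by
  rw [← le_div_iff₀' hθ]
  exact csInf_le ⟨0, fun x hx => ((one_sub_le_cdf_iff hu.2).1 hx).1⟩
    (one_sub_le_cdf_of_mul_eq hθ hβ hu (mul_div_cancel₀ _ hθ.ne'))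

end PseudoLindley

lemma tendsto_add_two_mul_sqrt_div_self_atTop :
    Tendsto (fun L : ℝ => (L + 2 * √L) / L) atTop (𝓝 1) := by
  have h : Tendsto (fun L : ℝ => 1 + 2 * (√L)⁻¹) atTop (𝓝 (1 + 2 * 0)) :=
    ((tendsto_inv_atTop_zero.comp tendsto_sqrt_atTop).const_mul 2).const_add 1
  rw [mul_zero, add_zero] at h
  refine h.congr' ((eventually_gt_atTop 0).mono fun L hL => ?_)
  have hs : 0 < √L := sqrt_pos.2 hL
  field_simp
  nlinarith [mul_self_sqrt hL.le]

theorem pseudoLindley_quantile_firstOrder (θ β : ℝ) (hθ : 0 < θ) (hβ : 1 < β)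
    (F : ℝ → ℝ)
    (hF : ∀ x : ℝ, F x = if 0 ≤ x then 1 - (β + θ * x) * Real.exp (-θ * x) / β else 0)
    (Finv : ℝ → ℝ) (hFinv : ∀ v ∈ Set.Ioo (0 : ℝ) 1, Finv v = sInf {x : ℝ | v ≤ F x}) :
    Tendsto (fun u => Finv (1 - u) / (θ⁻¹ * Real.log (1 / u)))
      (nhdsWithin 0 (Set.Ioi 0)) (nhds 1) := by
  have hF_eq : F = PseudoLindley.cdf θ β := funext hF
  have hlog : Tendsto (fun u : ℝ => log (1 / u)) (𝓝[>] 0) atTop := by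
    simpa only [one_div, log_inv, Function.comp_def] using
      tendsto_neg_atBot_atTop.comp tendsto_log_nhdsGT_zero
  have hbounds : ∀ᶠ u in 𝓝[>] (0 : ℝ),
      1 ≤ Finv (1 - u) / (θ⁻¹ * log (1 / u)) ∧
      Finv (1 - u) / (θ⁻¹ * log (1 / u)) ≤ (log (1 / u) + 2 * √(log (1 / u))) / log (1 / u) := by
    filter_upwards [Ioo_mem_nhdsGT one_pos, hlog.eventually_gt_atTop 0] with u hu hL
    have hq : Finv (1 - u) = PseudoLindley.quantile θ β (1 - u) := by
      rw [hFinv _ ⟨by linarith [hu.2], by linarith [hu.1]⟩, hF_eq, PseudoLindley.quantile]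
    have hratio : Finv (1 - u) / (θ⁻¹ * log (1 / u)) = θ * Finv (1 - u) / log (1 / u) := by
      field_simp
    rw [hratio, hq, le_div_iff₀ hL, one_mul]
    exact ⟨PseudoLindley.log_one_div_le_mul_quantile_one_sub hθ hβ.le hu,
      div_le_div_of_nonneg_right (PseudoLindley.mul_quantile_one_sub_le hθ hβ.le hu) hL.le⟩
  exact tendsto_of_tendsto_of_tendsto_of_le_of_le' tendsto_const_nhds
    (tendsto_add_two_mul_sqrt_div_self_atTop.comp hlog)
    (hbounds.mono fun _ h => h.1) (hbounds.mono fun _ h => h.2)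
end
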